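/- Let ψ ∈ ℝ and let F, G : [0, 4π] → ℝ be continuous functions with |F(φ) − cos(ψ + φ/2)| ≤ 1/10 and |G(φ) − sin(ψ + φ/2)| ≤ 1/10 for all φ ∈ [0, 4π]. Then for every t ∈ ℝ there exists φ ∈ [0, 4π] such that G(φ) = t·F(φ) and F(φ) ≠ 0 (so that G(φ)/F(φ) = t). -/

import Mathlib

/-!
Put `H = G - t F`. With `θ = arctan t` one has `sin x - t cos x = √(1 + t²) sin (x - θ)`, so `H` is
uniformly within `(1 + |t|)/10 < √(1 + t²)` of `√(1 + t²) sin (ψ - θ + φ/2)`. As `φ` runs over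
`[0, 4π]` this sine attains both `1` and `-1`, so `H` changes sign and has a zero by the
intermediate value theorem. There `F ≠ 0`, since `F = G = 0` would put both `|cos|` and `|sin|`
below `1/10`, whereas `|cos x| + |sin x| ≥ 1`.
-/

open Set Real

lemma sin_sub_mul_cos_eq (x t : ℝ) :
    sin x - t * cos x = √(1 + t ^ 2) * sin (x - arctan t) := by
  have hs : √(1 + t ^ 2) ≠ 0 := (sqrt_pos.mpr (by positivity)).ne'
  rw [sin_sub, sin_arctan, cos_arctan]
  field_simp

lemma one_add_abs_div_ten_lt_sqrt (t : ℝ) : (1 + |t|) / 10 < √(1 + t ^ 2) := by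
  have h1 : 1 ≤ √(1 + t ^ 2) := one_le_sqrt.mpr (by nlinarith)
  have ht : |t| ≤ √(1 + t ^ 2) := by
    rw [← sqrt_sq_eq_abs]
    exact sqrt_le_sqrt (by linarith)
  linarith

lemma one_le_abs_cos_add_abs_sin (x : ℝ) : 1 ≤ |cos x| + |sin x| := by
  have h : |cos x| ^ 2 + |sin x| ^ 2 = 1 := by rw [sq_abs, sq_abs, cos_sq_add_sin_sq]
  nlinarith [abs_nonneg (cos x), abs_nonneg (sin x)]

lemma abs_sub_mul_sub_sub_mul_le {f g c d ε : ℝ} (t : ℝ) (hf : |f - c| ≤ ε) (hg : |g - d| ≤ ε) :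
    |(g - t * f) - (d - t * c)| ≤ (1 + |t|) * ε :=
  calc |(g - t * f) - (d - t * c)| = |(g - d) - t * (f - c)| := by ring_nf
    _ ≤ |g - d| + |t| * |f - c| := by rw [← abs_mul]; exact abs_sub _ _
    _ ≤ ε + |t| * ε := by gcongr
    _ = (1 + |t|) * ε := by ring

lemma exists_mem_Icc_sin_add_half_eq (a : ℝ) {y : ℝ} (hy : y ∈ Icc (-1 : ℝ) 1) :
    ∃ φ ∈ Icc 0 (4 * π), sin (a + φ / 2) = y := by
  have hper : Function.Periodic (fun φ => sin (a + φ / 2)) (4 * π) := fun φ => by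
    simp [add_div, ← add_assoc, show 4 * π / 2 = 2 * π by ring]
  obtain ⟨φ, hφ, hφy⟩ := hper.exists_mem_Ico₀ (by positivity) (2 * (arcsin y - a))
  refine ⟨φ, Ico_subset_Icc_self hφ, ?_⟩
  rw [← show sin (a + 2 * (arcsin y - a) / 2) = y by simp [sin_arcsin hy.1 hy.2]]
  exact hφy.symm

lemma exists_zero_of_abs_sub_sin_add_half_le {H : ℝ → ℝ} {a s ε : ℝ}
    (hH : ContinuousOn H (Icc 0 (4 * π))) (hε : ε < s)
    (hnear : ∀ φ ∈ Icc 0 (4 * π), |H φ - s * sin (a + φ / 2)| ≤ ε) :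
    ∃ φ ∈ Icc 0 (4 * π), H φ = 0 := by
  obtain ⟨φ₀, hφ₀, hsin₀⟩ := exists_mem_Icc_sin_add_half_eq a (y := -1) (by norm_num)
  obtain ⟨φ₁, hφ₁, hsin₁⟩ := exists_mem_Icc_sin_add_half_eq a (y := 1) (by norm_num)
  have hneg : H φ₀ ≤ 0 := by
    have := (abs_le.mp (hnear φ₀ hφ₀)).2
    rw [hsin₀] at this
    linarith
  have hpos : 0 ≤ H φ₁ := by
    have := (abs_le.mp (hnear φ₁ hφ₁)).1
    rw [hsin₁] at this
    linarith
  exact isPreconnected_Icc.intermediate_value hφ₀ hφ₁ hH ⟨hneg, hpos⟩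

/-- **Phase-selection lemma.**
If `F, G` are continuous on `[0, 4π]` and uniformly within `1/10` of `cos(ψ + φ/2)` and
`sin(ψ + φ/2)` respectively, then for every prescribed `t ∈ ℝ` there is a phase
`φ ∈ [0, 4π]` with `G(φ) = t·F(φ)` and `F(φ) ≠ 0`, i.e. `G(φ)/F(φ) = t`. -/
theorem phase_selection
    (ψ : ℝ) (F G : ℝ → ℝ)
    (hF : ContinuousOn F (Icc 0 (4 * Real.pi)))
    (hG : ContinuousOn G (Icc 0 (4 * Real.pi)))
    (hFb : ∀ φ ∈ Icc (0 : ℝ) (4 * Real.pi), |F φ - Real.cos (ψ + φ / 2)| ≤ 1 / 10)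
    (hGb : ∀ φ ∈ Icc (0 : ℝ) (4 * Real.pi), |G φ - Real.sin (ψ + φ / 2)| ≤ 1 / 10) :
    ∀ t : ℝ, ∃ φ ∈ Icc (0 : ℝ) (4 * Real.pi), G φ = t * F φ ∧ F φ ≠ 0 := by
  intro t
  have hnear : ∀ φ ∈ Icc 0 (4 * π),
      |(G φ - t * F φ) - √(1 + t ^ 2) * sin (ψ - arctan t + φ / 2)| ≤ (1 + |t|) / 10 := by
    intro φ hφ
    rw [show ψ - arctan t + φ / 2 = ψ + φ / 2 - arctan t by ring, ← sin_sub_mul_cos_eq,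
      show (1 + |t|) / 10 = (1 + |t|) * (1 / 10) by ring]
    exact abs_sub_mul_sub_sub_mul_le t (hFb φ hφ) (hGb φ hφ)
  obtain ⟨φ, hφ, hzero⟩ := exists_zero_of_abs_sub_sin_add_half_le
    (H := fun φ => G φ - t * F φ) (hG.sub (continuousOn_const.mul hF))
    (one_add_abs_div_ten_lt_sqrt t) hnear
  refine ⟨φ, hφ, by linarith, fun hF0 => ?_⟩
  have hG0 : G φ = 0 := by rw [hF0] at hzero; linarith
  have hcos := hFb φ hφ
  have hsin := hGb φ hφ
  rw [hF0, zero_sub, abs_neg] at hcos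
  rw [hG0, zero_sub, abs_neg] at hsin
  linarith [one_le_abs_cos_add_abs_sin (ψ + φ / 2)]
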